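/- 5R_{2,6} + 2R_{3,5} = 1798·ζ(3)·ζ(5) − (17/72)π⁸, where R_{p,q} = ∑_{n≥1} H_{n-1}^{(p)}/(n−1/2)^q with H_n^{(r)} = ∑_{k=1}^n 1/k^r. -/

import Mathlib

/-- odd harmonic numbers of order r: h_n^{(r)} = ∑_{k=1}^n 1/(k-1/2)^r -/
noncomputable def oddH (r n : ℕ) : ℝ := ∑ k ∈ Finset.range n, (((k : ℝ) + 1/2) ^ r)⁻¹

/-- generalized harmonic numbers of order r: H_n^{(r)} = ∑_{k=1}^n 1/k^r -/
noncomputable def genH (r n : ℕ) : ℝ := ∑ k ∈ Finset.range n, (((k : ℝ) + 1) ^ r)⁻¹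

/-- T_{p,q} = ∑_{n≥1} h_{n-1}^{(p)}/(n-1/2)^q -/
noncomputable def Tsum (p q : ℕ) : ℝ := ∑' n : ℕ, oddH p n / ((n : ℝ) + 1/2) ^ q

/-- S̃_{p,q} = ∑_{n≥1} h_n^{(p)}/n^q -/
noncomputable def Ssum (p q : ℕ) : ℝ := ∑' n : ℕ, oddH p (n + 1) / ((n : ℝ) + 1) ^ q

/-- R_{p,q} = ∑_{n≥1} H_{n-1}^{(p)}/(n-1/2)^q -/
noncomputable def Rsum (p q : ℕ) : ℝ := ∑' n : ℕ, genH p n / ((n : ℝ) + 1/2) ^ q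

/-- t̃(s) = ∑_{n≥1} 1/(n-1/2)^s -/
noncomputable def ttv (s : ℕ) : ℝ := ∑' n : ℕ, (((n : ℝ) + 1/2) ^ s)⁻¹

/-- ζ(s) = ∑_{n≥1} 1/n^s (for integer s ≥ 2) -/
noncomputable def zv (s : ℕ) : ℝ := ∑' n : ℕ, (((n : ℝ) + 1) ^ s)⁻¹

/-!
Put x = m + 1 and y = n + 1/2 for m, n ∈ ℕ, so that ζ(a)·t̃(b) = ∑ 1/(x^a y^b). Partial fractions
split 1/(x^a y^b) into multiples of 1/(x^j (x+y)^(a+b-j)) and 1/(y^j (x+y)^(a+b-j)), and summing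
these over the pairs with x + y = N + 1/2 fixed gives R_{j,a+b-j} and T_{j,a+b-j}. In
5·ζ(2)t̃(6) - 2·ζ(3)t̃(5) the sums R_{1,7} and T_{1,7} cancel, and the T-sums that remain come in
pairs T_{a,b} + T_{b,a} = t̃(a)t̃(b) - t̃(a+b). Since t̃(s) = (2^s - 1)ζ(s), what is left is
ζ(3)ζ(5) and the values of ζ at even integers.
-/

open Finset Real

lemma summable_inv_nat_add_pow {c : ℝ} (hc : 0 < c) {s : ℕ} (hs : 2 ≤ s) :
    Summable fun n : ℕ => (((n : ℝ) + c) ^ s)⁻¹ := by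
  refine ((summable_one_div_nat_add_rpow c s).2 (by exact_mod_cast hs)).congr fun n => ?_
  rw [abs_of_pos (by positivity), rpow_natCast, one_div]

lemma hasSum_zv {s : ℕ} (hs : 2 ≤ s) : HasSum (fun n : ℕ => (((n : ℝ) + 1) ^ s)⁻¹) (zv s) :=
  (summable_inv_nat_add_pow one_pos hs).hasSum

lemma hasSum_ttv {s : ℕ} (hs : 2 ≤ s) :
    HasSum (fun n : ℕ => (((n : ℝ) + 1 / 2) ^ s)⁻¹) (ttv s) :=
  (summable_inv_nat_add_pow (by norm_num) hs).hasSum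

theorem ttv_eq_two_pow_sub_one_mul_zv {s : ℕ} (hs : 2 ≤ s) : ttv s = (2 ^ s - 1) * zv s := by
  have heven : HasSum (fun k : ℕ => ((((2 * k : ℕ) : ℝ) + 1) ^ s)⁻¹) ((2 ^ s)⁻¹ * ttv s) :=
    ((hasSum_ttv hs).mul_left _).congr_fun fun k => by
      rw [← mul_inv, ← mul_pow]; push_cast; ring_nf
  have hodd : HasSum (fun k : ℕ => ((((2 * k + 1 : ℕ) : ℝ) + 1) ^ s)⁻¹) ((2 ^ s)⁻¹ * zv s) :=
    ((hasSum_zv hs).mul_left _).congr_fun fun k => by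
      rw [← mul_inv, ← mul_pow]; push_cast; ring_nf
  have h := (HasSum.even_add_odd (f := fun n : ℕ => (((n : ℝ) + 1) ^ s)⁻¹) heven hodd).unique
    (hasSum_zv hs)
  have h2 : (2 : ℝ) ^ s ≠ 0 := by positivity
  field_simp at h
  linarith

lemma zv_eq_of_hasSum {s : ℕ} (hs : s ≠ 0) {v : ℝ}
    (h : HasSum (fun n : ℕ => 1 / (n : ℝ) ^ s) v) : zv s = v := by
  rw [← hasSum_nat_add_iff' 1] at h
  rw [zv]
  simpa [zero_pow hs] using h.tsum_eq

lemma bernoulli'_six : bernoulli' 6 = 1 / 42 := by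
  rw [bernoulli'_def]
  norm_num [sum_range_succ, Nat.choose,
    bernoulli'_eq_zero_of_odd (n := 5) (by decide) (by norm_num)]

lemma bernoulli'_eight : bernoulli' 8 = -1 / 30 := by
  rw [bernoulli'_def]
  norm_num [sum_range_succ, Nat.choose, bernoulli'_six,
    bernoulli'_eq_zero_of_odd (n := 5) (by decide) (by norm_num),
    bernoulli'_eq_zero_of_odd (n := 7) (by decide) (by norm_num)]

lemma zv_two : zv 2 = π ^ 2 / 6 := zv_eq_of_hasSum two_ne_zero hasSum_zeta_two

lemma zv_four : zv 4 = π ^ 4 / 90 := zv_eq_of_hasSum four_ne_zero hasSum_zeta_four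

lemma zv_six : zv 6 = π ^ 6 / 945 := by
  rw [zv_eq_of_hasSum (s := 2 * 3) (by norm_num) (hasSum_zeta_nat three_ne_zero),
    bernoulli_eq_bernoulli'_of_ne_one (by norm_num), bernoulli'_six]
  norm_num [Nat.factorial]
  ring

lemma zv_eight : zv 8 = π ^ 8 / 9450 := by
  rw [zv_eq_of_hasSum (s := 2 * 4) (by norm_num) (hasSum_zeta_nat four_ne_zero),
    bernoulli_eq_bernoulli'_of_ne_one (by norm_num), bernoulli'_eight]
  norm_num [Nat.factorial]
  ring

lemma hasSum_sum_range_of_hasSum_prod {α : Type*} [AddCommMonoid α] [TopologicalSpace α]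
    [ContinuousAdd α] [RegularSpace α] {F : ℕ → ℕ → α} {a : α}
    (h : HasSum (fun p : ℕ × ℕ => F p.1 (p.1 + p.2 + 1)) a) :
    HasSum (fun n => ∑ m ∈ range n, F m n) a := by
  classical
  set G : ℕ × ℕ → α := fun q => if q.2 < q.1 then F q.2 q.1 else 0
  have hinj : Function.Injective fun p : ℕ × ℕ => (p.1 + p.2 + 1, p.1) := by
    intro p q hpq
    simp only [Prod.mk.injEq] at hpq
    exact Prod.ext hpq.2 (by omega)
  have hG : HasSum G a := by
    refine (hinj.hasSum_iff fun q hq => if_neg fun hlt => hq ⟨(q.2, q.1 - q.2 - 1), ?_⟩).1 ?_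
    · exact Prod.ext (by simp only; omega) rfl
    · exact h.congr_fun fun p => if_pos (by simp only; omega)
  refine hG.prod_fiberwise fun n => ?_
  rw [sum_congr rfl fun m hm => (if_pos (mem_range.1 hm) : G (n, m) = F m n).symm]
  exact hasSum_sum_of_ne_finset_zero fun m hm => if_neg (by simpa using hm)

lemma sq_mul_sq_le_pow_mul_add_pow {x y : ℝ} (hx : 1 ≤ x) (hy : 1 ≤ y) {k l : ℕ}
    (hk : 1 ≤ k) (hl : 2 ≤ l) (hkl : 4 ≤ k + l) :
    x ^ 2 * y ^ 2 ≤ x ^ k * (x + y) ^ l := by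
  have hxy : 1 ≤ x + y := by linarith
  rcases (show 2 ≤ k ∨ (k = 1 ∧ 3 ≤ l) by omega) with hk2 | ⟨rfl, hl3⟩
  · calc x ^ 2 * y ^ 2 ≤ x ^ k * (x + y) ^ 2 := by gcongr; linarith
      _ ≤ x ^ k * (x + y) ^ l := by gcongr
  · calc x ^ 2 * y ^ 2 ≤ x ^ 1 * (x + y) ^ 3 := by
          nlinarith [mul_pos (by linarith : 0 < x) (by linarith : 0 < y)]
      _ ≤ x ^ 1 * (x + y) ^ l := by gcongr

lemma summable_inv_pow_mul_add_pow {c d : ℝ} (hc : 1 / 2 ≤ c) (hd : 1 / 2 ≤ d) {k l : ℕ}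
    (hk : 1 ≤ k) (hl : 2 ≤ l) (hkl : 4 ≤ k + l) :
    Summable fun p : ℕ × ℕ => (((p.1 : ℝ) + c) ^ k * ((p.1 + c) + (p.2 + d)) ^ l)⁻¹ := by
  have hc2 : Summable fun n : ℕ => (((n : ℝ) + c) ^ 2)⁻¹ :=
    summable_inv_nat_add_pow (by linarith) le_rfl
  have hd2 : Summable fun n : ℕ => (((n : ℝ) + d) ^ 2)⁻¹ :=
    summable_inv_nat_add_pow (by linarith) le_rfl
  have hsq := hc2.mul_of_nonneg hd2 (fun _ => by positivity) (fun _ => by positivity)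
  refine .of_nonneg_of_le (fun p => by positivity) (fun p => ?_) (hsq.mul_left (2 ^ (k + l)))
  set x := (p.1 : ℝ) + c
  set y := (p.2 : ℝ) + d
  have hx : 1 / 2 ≤ x := by simp only [x]; linarith [p.1.cast_nonneg (α := ℝ)]
  have hy : 1 / 2 ≤ y := by simp only [y]; linarith [p.2.cast_nonneg (α := ℝ)]
  have key : x ^ 2 * y ^ 2 / 2 ^ (k + l) ≤ x ^ k * (x + y) ^ l := by
    have h := sq_mul_sq_le_pow_mul_add_pow (x := 2 * x) (y := 2 * y) (by linarith) (by linarith)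
      hk hl hkl
    have h2 : (2 * x) ^ k * (2 * x + 2 * y) ^ l = x ^ k * (x + y) ^ l * 2 ^ (k + l) := by
      rw [← mul_add, mul_pow, mul_pow, pow_add]; ring
    rw [div_le_iff₀ (by positivity)]
    nlinarith [mul_nonneg (sq_nonneg x) (sq_nonneg y)]
  calc (x ^ k * (x + y) ^ l)⁻¹ ≤ (x ^ 2 * y ^ 2 / 2 ^ (k + l))⁻¹ :=
        inv_anti₀ (by positivity) key
    _ = 2 ^ (k + l) * ((x ^ 2)⁻¹ * (y ^ 2)⁻¹) := by rw [inv_div, div_eq_mul_inv, mul_inv]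

lemma hasSum_sum_range_inv_pow_div {c d e : ℝ} (hc : 1 / 2 ≤ c) (hd : 1 / 2 ≤ d)
    (hcde : c + d = e + 1) {k l : ℕ} (hk : 1 ≤ k) (hl : 2 ≤ l) (hkl : 4 ≤ k + l) :
    HasSum (fun n : ℕ => (∑ m ∈ range n, (((m : ℝ) + c) ^ k)⁻¹) / ((n : ℝ) + e) ^ l)
      (∑' p : ℕ × ℕ, (((p.1 : ℝ) + c) ^ k * ((p.1 + c) + (p.2 + d)) ^ l)⁻¹) := by
  have h := hasSum_sum_range_of_hasSum_prod
    (F := fun m n : ℕ => (((m : ℝ) + c) ^ k)⁻¹ * (((n : ℝ) + e) ^ l)⁻¹)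
    ((summable_inv_pow_mul_add_pow hc hd hk hl hkl).hasSum.congr_fun fun p => by
      have hs : ((p.1 + p.2 + 1 : ℕ) : ℝ) + e = (p.1 + c) + (p.2 + d) := by
        push_cast; linarith
      rw [hs, mul_inv])
  simpa only [div_eq_mul_inv, sum_mul] using h

lemma hasSum_Rsum (k l : ℕ) (hk : 1 ≤ k := by norm_num) (hl : 2 ≤ l := by norm_num)
    (hkl : 4 ≤ k + l := by norm_num) :
    HasSum (fun p : ℕ × ℕ => (((p.1 : ℝ) + 1) ^ k * ((p.1 + 1) + (p.2 + 1 / 2)) ^ l)⁻¹)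
      (Rsum k l) := by
  rw [show Rsum k l = _ from
    (hasSum_sum_range_inv_pow_div (by norm_num) le_rfl (by norm_num) hk hl hkl).tsum_eq]
  exact (summable_inv_pow_mul_add_pow (by norm_num) le_rfl hk hl hkl).hasSum

lemma hasSum_oddH_div {k l : ℕ} (hk : 1 ≤ k) (hl : 2 ≤ l) (hkl : 4 ≤ k + l) :
    HasSum (fun n : ℕ => oddH k n / ((n : ℝ) + 1 / 2) ^ l) (Tsum k l) :=
  (hasSum_sum_range_inv_pow_div (d := 1) le_rfl (by norm_num) (by norm_num) hk hl
    hkl).summable.hasSum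

lemma hasSum_Tsum (k l : ℕ) (hk : 1 ≤ k := by norm_num) (hl : 2 ≤ l := by norm_num)
    (hkl : 4 ≤ k + l := by norm_num) :
    HasSum (fun p : ℕ × ℕ => (((p.2 : ℝ) + 1 / 2) ^ k * ((p.2 + 1 / 2) + (p.1 + 1)) ^ l)⁻¹)
      (Tsum k l) := by
  rw [show Tsum k l = _ from
    (hasSum_sum_range_inv_pow_div (d := 1) le_rfl (by norm_num) (by norm_num) hk hl hkl).tsum_eq]
  exact (Equiv.prodComm ℕ ℕ).hasSum_iff.2
    (summable_inv_pow_mul_add_pow le_rfl (by norm_num) hk hl hkl).hasSum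

lemma sum_range_mul_sum_range {R : Type*} [CommSemiring R] (f g : ℕ → R) (N : ℕ) :
    (∑ n ∈ range N, f n) * (∑ n ∈ range N, g n) =
      ∑ n ∈ range N, ((∑ m ∈ range n, f m) * g n + (∑ m ∈ range n, g m) * f n + f n * g n) := by
  induction N with
  | zero => simp
  | succ N ih => simp only [sum_range_succ, ← ih]; ring

theorem ttv_mul_ttv {a b : ℕ} (ha : 2 ≤ a) (hb : 2 ≤ b) :
    ttv a * ttv b = Tsum a b + Tsum b a + ttv (a + b) := by
  set f := fun n : ℕ => (((n : ℝ) + 1 / 2) ^ a)⁻¹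
  set g := fun n : ℕ => (((n : ℝ) + 1 / 2) ^ b)⁻¹
  have hab : HasSum (fun n => (∑ m ∈ range n, f m) * g n) (Tsum a b) :=
    (hasSum_oddH_div (by omega) hb (by omega)).congr_fun fun n => div_eq_mul_inv _ _
  have hba : HasSum (fun n => (∑ m ∈ range n, g m) * f n) (Tsum b a) :=
    (hasSum_oddH_div (by omega) ha (by omega)).congr_fun fun n => div_eq_mul_inv _ _
  have hdiag : HasSum (fun n => f n * g n) (ttv (a + b)) := by
    simpa only [pow_add, mul_inv] using hasSum_ttv (s := a + b) (by omega)
  refine tendsto_nhds_unique ?_ ((hab.add hba).add hdiag).tendsto_sum_nat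
  simpa only [sum_range_mul_sum_range] using
    (hasSum_ttv ha).tendsto_sum_nat.mul (hasSum_ttv hb).tendsto_sum_nat

lemma hasSum_zv_mul_ttv {a b : ℕ} (ha : 2 ≤ a) (hb : 2 ≤ b) :
    HasSum (fun p : ℕ × ℕ => (((p.1 : ℝ) + 1) ^ a)⁻¹ * (((p.2 : ℝ) + 1 / 2) ^ b)⁻¹)
      (zv a * ttv b) :=
  (hasSum_zv ha).mul (hasSum_ttv hb) ((hasSum_zv ha).summable.mul_of_nonneg
    (hasSum_ttv hb).summable (fun _ => by positivity) (fun _ => by positivity))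

/- In `1 / (x ^ a * y ^ b)` the coefficient of `1 / (x ^ j * (x + y) ^ (a + b - j))` is
`(a + b - j - 1).choose (b - 1)`, that of `1 / (y ^ j * (x + y) ^ (a + b - j))` is
`(a + b - j - 1).choose (a - 1)`. -/
lemma inv_sq_mul_inv_pow_six {x y : ℝ} (hx : 0 < x) (hy : 0 < y) :
    (x ^ 2)⁻¹ * (y ^ 6)⁻¹ =
      6 * (x ^ 1 * (x + y) ^ 7)⁻¹ + (x ^ 2 * (x + y) ^ 6)⁻¹ +
        (6 * (y ^ 1 * (y + x) ^ 7)⁻¹ + 5 * (y ^ 2 * (y + x) ^ 6)⁻¹ +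
          4 * (y ^ 3 * (y + x) ^ 5)⁻¹ + 3 * (y ^ 4 * (y + x) ^ 4)⁻¹ +
          2 * (y ^ 5 * (y + x) ^ 3)⁻¹ + (y ^ 6 * (y + x) ^ 2)⁻¹) := by
  field_simp
  ring

lemma inv_pow_three_mul_inv_pow_five {x y : ℝ} (hx : 0 < x) (hy : 0 < y) :
    (x ^ 3)⁻¹ * (y ^ 5)⁻¹ =
      15 * (x ^ 1 * (x + y) ^ 7)⁻¹ + 5 * (x ^ 2 * (x + y) ^ 6)⁻¹ + (x ^ 3 * (x + y) ^ 5)⁻¹ +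
        (15 * (y ^ 1 * (y + x) ^ 7)⁻¹ + 10 * (y ^ 2 * (y + x) ^ 6)⁻¹ +
          6 * (y ^ 3 * (y + x) ^ 5)⁻¹ + 3 * (y ^ 4 * (y + x) ^ 4)⁻¹ + (y ^ 5 * (y + x) ^ 3)⁻¹) := by
  field_simp
  ring

theorem zv_two_mul_ttv_six :
    zv 2 * ttv 6 = 6 * Rsum 1 7 + Rsum 2 6 +
      (6 * Tsum 1 7 + 5 * Tsum 2 6 + 4 * Tsum 3 5 + 3 * Tsum 4 4 + 2 * Tsum 5 3 + Tsum 6 2) := by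
  have hR := ((hasSum_Rsum 1 7).mul_left 6).add (hasSum_Rsum 2 6)
  have hT := ((((((hasSum_Tsum 1 7).mul_left 6).add ((hasSum_Tsum 2 6).mul_left 5)).add
    ((hasSum_Tsum 3 5).mul_left 4)).add ((hasSum_Tsum 4 4).mul_left 3)).add
    ((hasSum_Tsum 5 3).mul_left 2)).add (hasSum_Tsum 6 2)
  exact (hasSum_zv_mul_ttv le_rfl (by norm_num)).unique <|
    (hR.add hT).congr_fun fun _ => inv_sq_mul_inv_pow_six (by positivity) (by positivity)

theorem zv_three_mul_ttv_five :
    zv 3 * ttv 5 = 15 * Rsum 1 7 + 5 * Rsum 2 6 + Rsum 3 5 +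
      (15 * Tsum 1 7 + 10 * Tsum 2 6 + 6 * Tsum 3 5 + 3 * Tsum 4 4 + Tsum 5 3) := by
  have hR := (((hasSum_Rsum 1 7).mul_left 15).add ((hasSum_Rsum 2 6).mul_left 5)).add
    (hasSum_Rsum 3 5)
  have hT := (((((hasSum_Tsum 1 7).mul_left 15).add ((hasSum_Tsum 2 6).mul_left 10)).add
    ((hasSum_Tsum 3 5).mul_left 6)).add ((hasSum_Tsum 4 4).mul_left 3)).add (hasSum_Tsum 5 3)
  exact (hasSum_zv_mul_ttv (by norm_num) (by norm_num)).unique <|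
    (hR.add hT).congr_fun fun _ => inv_pow_three_mul_inv_pow_five (by positivity) (by positivity)

theorem stmt11 : 5 * Rsum 2 6 + 2 * Rsum 3 5 = 1798 * zv 3 * zv 5 - 17 / 72 * Real.pi ^ 8 := by
  have h26 := zv_two_mul_ttv_six
  have h35 := zv_three_mul_ttv_five
  have s26 := ttv_mul_ttv (a := 2) (b := 6) le_rfl (by norm_num)
  have s35 := ttv_mul_ttv (a := 3) (b := 5) (by norm_num) (by norm_num)
  have s44 := ttv_mul_ttv (a := 4) (b := 4) (by norm_num) (by norm_num)
  simp (disch := norm_num) only [Nat.reduceAdd, ttv_eq_two_pow_sub_one_mul_zv, zv_two, zv_four,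
    zv_six, zv_eight] at h26 h35 s26 s35 s44
  linear_combination 5 * h26 - 2 * h35 - 5 * s26 - 8 * s35 - 9 / 2 * s44
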